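/- arXiv:2411.04745 — 3 statements merged into one kernel-verified Lean document; each statement's English description precedes it below -/
import Mathlib

section
/- Let R be a commutative ring that is either a field or a countable principal ideal domain. Let M be an R-module and let M = M_0 ⊇ M_1 ⊇ M_2 ⊇ ⋯ be a descending sequence of submodules that does not stabilise, i.e., for every j the intersection ⋂_i M_i is not equal to M_j. Then the inverse limit lim (M/M_i), taken along the natural quotient maps M/M_{i+1} → M/M_i, is not a countably generated R-module. -/
/-- The Eilenberg map `Δ : ∏ᵢ Mᵢ → ∏ᵢ Mᵢ`, `Δ((mᵢ)ᵢ) = (mᵢ − gᵢ(m_{i+1}))ᵢ`, of an inverse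
sequence of `R`-modules `(Mᵢ, gᵢ)`. -/
noncomputable def eilenberg (R : Type) [CommRing R] (M : ℕ → Type)
    [∀ i, AddCommGroup (M i)] [∀ i, Module R (M i)]
    (g : ∀ i : ℕ, M (i + 1) →ₗ[R] M i) : ((i : ℕ) → M i) →ₗ[R] ((i : ℕ) → M i) where
  toFun x := fun i => x i - g i (x (i + 1))
  map_add' x y := by
    funext i
    simp only [Pi.add_apply, map_add]
    abel
  map_smul' c x := by
    funext i
    simp only [Pi.smul_apply, map_smul, RingHom.id_apply, smul_sub]

/-- The inverse limit `lim Mᵢ` of an inverse sequence, as the kernel of the Eilenberg map. -/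
noncomputable def invLim (R : Type) [CommRing R] (M : ℕ → Type)
    [∀ i, AddCommGroup (M i)] [∀ i, Module R (M i)]
    (g : ∀ i : ℕ, M (i + 1) →ₗ[R] M i) : Submodule R ((i : ℕ) → M i) :=
  LinearMap.ker (eilenberg R M g)

/-- The derived limit `lim¹ Mᵢ` of an inverse sequence, as the cokernel of the Eilenberg map. -/
noncomputable abbrev derivedLim (R : Type) [CommRing R] (M : ℕ → Type)
    [∀ i, AddCommGroup (M i)] [∀ i, Module R (M i)]
    (g : ∀ i : ℕ, M (i + 1) →ₗ[R] M i) : Type :=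
  ((i : ℕ) → M i) ⧸ LinearMap.range (eilenberg R M g)

/-- The projection `lim Mᵢ → M_k`. -/
noncomputable def limProj (R : Type) [CommRing R] (M : ℕ → Type)
    [∀ i, AddCommGroup (M i)] [∀ i, Module R (M i)]
    (g : ∀ i : ℕ, M (i + 1) →ₗ[R] M i) (k : ℕ) : ↥(invLim R M g) →ₗ[R] M k :=
  (LinearMap.proj k).comp (invLim R M g).subtype

/-- The composite bonding map `f_i^{i+j} : M_{i+j} → M_i` of an inverse sequence. -/
noncomputable def transDown (R : Type) [CommRing R] (M : ℕ → Type)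
    [∀ i, AddCommGroup (M i)] [∀ i, Module R (M i)]
    (g : ∀ i : ℕ, M (i + 1) →ₗ[R] M i) : (i j : ℕ) → M (i + j) →ₗ[R] M i
  | _, 0 => LinearMap.id
  | i, j + 1 => (transDown R M g i j).comp (g (i + j))

/-- An inverse sequence satisfies the *Mittag-Leffler condition* if for every `i` the
decreasing sequence of images `range f_i^j ⊆ M_i` is eventually constant. -/
def MittagLeffler (R : Type) [CommRing R] (M : ℕ → Type)
    [∀ i, AddCommGroup (M i)] [∀ i, Module R (M i)]
    (g : ∀ i : ℕ, M (i + 1) →ₗ[R] M i) : Prop :=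
  ∀ i : ℕ, ∃ j : ℕ, ∀ k : ℕ,
    LinearMap.range (transDown R M g i (j + k)) = LinearMap.range (transDown R M g i j)

/-- An inverse sequence is *stable* if it satisfies the Mittag-Leffler condition and the
projections `lim Mᵢ → Mᵢ` are injective for all sufficiently large `i`. -/
def IsStable (R : Type) [CommRing R] (M : ℕ → Type)
    [∀ i, AddCommGroup (M i)] [∀ i, Module R (M i)]
    (g : ∀ i : ℕ, M (i + 1) →ₗ[R] M i) : Prop :=
  MittagLeffler R M g ∧ ∃ i₀ : ℕ, ∀ i : ℕ, i₀ ≤ i → Function.Injective (limProj R M g i)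

/-- An `R`-module is *countably generated* if it is the span of a countable subset. -/
def CountablyGeneratedMod (R : Type) (M : Type) [CommRing R] [AddCommGroup M]
    [Module R M] : Prop :=
  ∃ S : Set M, S.Countable ∧ Submodule.span R S = ⊤

/-!
Since the chain does not stabilise, one can choose `xₙ ∈ N n` such that each `xₙ` lies outside
some `N j` that contains all later `xₘ`. Every coefficient sequence `c : ℕ → R` then gives the
point `∑ₙ cₙ xₙ` of `lim M ⧸ N i`, and if two sequences `c ≠ c'` give the same point, then at the
first index where they differ, `cₙ - c'ₙ` kills `xₙ` modulo `N j`, so it is not a unit.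
Over a field this embeds `R^ℕ`, whose dimension `#(R^ℕ)` is uncountable (Erdős–Kaplansky); over a
countable ring the `0/1` sequences give uncountably many points of a module that would be countable.
-/

open Cardinal

theorem Cardinal.aleph0_lt_mk_nat_fun (α : Type) [Nontrivial α] : ℵ₀ < #(ℕ → α) := by
  rw [← power_def, mk_nat]
  exact cantor' _ (one_lt_iff_nontrivial.mpr ‹_›)

namespace CountablyGeneratedMod

variable {R M : Type} [CommRing R] [AddCommGroup M] [Module R M]

theorem rank_le_aleph0 [Nontrivial R] (h : CountablyGeneratedMod R M) :
    Module.rank R M ≤ ℵ₀ := by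
  obtain ⟨S, hS, hspan⟩ := h
  have := rank_span_le (R := R) S
  rw [hspan, rank_top] at this
  exact this.trans (mk_le_aleph0_iff.mpr hS.to_subtype)

theorem countable [Countable R] (h : CountablyGeneratedMod R M) : Countable M := by
  obtain ⟨S, hS, hspan⟩ := h
  have := hS.to_subtype
  have : Countable (Submodule.span R (Set.range ((↑) : S → M))) := inferInstance
  rw [Subtype.range_coe, hspan] at this
  exact Set.countable_univ_iff.mp (Set.countable_coe_iff.mp this)

end CountablyGeneratedMod

theorem Antitone.exists_seq_separated_of_iInf_ne {R M : Type*} [Semiring R] [AddCommMonoid M]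
    [Module R M] {N : ℕ → Submodule R M} (hN : Antitone N) (h : ∀ j, ⨅ i, N i ≠ N j) :
    ∃ x : ℕ → M, (∀ n, x n ∈ N n) ∧ ∀ n, ∃ j, n < j ∧ x n ∉ N j ∧ ∀ m, n < m → x m ∈ N j := by
  have hgap : ∀ j, ∃ i y, y ∈ N j ∧ y ∉ N i := by
    intro j
    obtain ⟨y, hyj, hy⟩ := SetLike.exists_of_lt (lt_of_le_of_ne (iInf_le N j) (h j))
    obtain ⟨i, hi⟩ := not_forall.mp fun hall => hy ((Submodule.mem_iInf N).mpr hall)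
    exact ⟨i, y, hyj, hi⟩
  choose f y hyj hyf using hgap
  have hf : ∀ j, j < f j := fun j => lt_of_not_ge fun hle => hyf j (hN hle (hyj j))
  set k : ℕ → ℕ := fun n => f^[n] 0
  have hk_succ : ∀ n, k (n + 1) = f (k n) := fun n => Function.iterate_succ_apply' f n 0
  have hk : StrictMono k := strictMono_nat_of_lt_succ fun n => hk_succ n ▸ hf (k n)
  refine ⟨fun n => y (k n), fun n => hN (hk.id_le n) (hyj _), fun n => ⟨k (n + 1), ?_, ?_, ?_⟩⟩
  · exact (Nat.lt_succ_self n).trans_le (hk.id_le _)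
  · exact hk_succ n ▸ hyf (k n)
  · exact fun m hm => hN (hk.monotone hm) (hyj (k m))

section SeriesToInvLim

variable {R M : Type} [CommRing R] [AddCommGroup M] [Module R M] {N : ℕ → Submodule R M}
  {g : ∀ i, (M ⧸ N (i + 1)) →ₗ[R] M ⧸ N i}

theorem mk_mem_invLim_iff
    (hg : ∀ i m, g i (Submodule.Quotient.mk m) = Submodule.Quotient.mk m) (y : ℕ → M) :
    (fun i => (Submodule.Quotient.mk (y i) : M ⧸ N i)) ∈ invLim R (fun i => M ⧸ N i) g ↔
      ∀ i, y i - y (i + 1) ∈ N i := by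
  simp only [invLim, LinearMap.mem_ker, funext_iff, eilenberg, LinearMap.coe_mk, AddHom.coe_mk,
    Pi.zero_apply, hg, ← Submodule.Quotient.mk_sub, Submodule.Quotient.mk_eq_zero]

noncomputable def seriesToInvLim
    (hg : ∀ i m, g i (Submodule.Quotient.mk m) = Submodule.Quotient.mk m)
    (x : ℕ → M) (hx : ∀ n, x n ∈ N n) : (ℕ → R) →ₗ[R] invLim R (fun i => M ⧸ N i) g where
  toFun c := ⟨fun i => Submodule.Quotient.mk (∑ n ∈ Finset.range i, c n • x n),
    (mk_mem_invLim_iff hg _).mpr fun i => by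
      rw [Finset.sum_range_succ, sub_add_cancel_left]
      exact (N i).neg_mem ((N i).smul_mem _ (hx i))⟩
  map_add' c d := by
    ext i
    simp [add_smul, Finset.sum_add_distrib]
  map_smul' r c := by
    ext i
    simp [mul_smul, ← Finset.smul_sum, ← Submodule.Quotient.mk_smul]

variable (hg : ∀ i m, g i (Submodule.Quotient.mk m) = Submodule.Quotient.mk m)
  {x : ℕ → M} (hx : ∀ n, x n ∈ N n)

theorem seriesToInvLim_apply (c : ℕ → R) (i : ℕ) :
    (seriesToInvLim hg x hx c : ∀ i, M ⧸ N i) i =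
      Submodule.Quotient.mk (∑ n ∈ Finset.range i, c n • x n) :=
  rfl

theorem smul_mem_of_seriesToInvLim_eq_zero {c : ℕ → R} {n j : ℕ}
    (hc : seriesToInvLim hg x hx c = 0) (hcn : ∀ m < n, c m = 0) (hnj : n < j)
    (hxj : ∀ m, n < m → x m ∈ N j) : c n • x n ∈ N j := by
  have hsum : ∑ m ∈ Finset.range j, c m • x m ∈ N j := by
    rw [← Submodule.Quotient.mk_eq_zero, ← seriesToInvLim_apply hg hx, hc]
    rfl
  rw [← Finset.sum_range_add_sum_Ico _ hnj, Finset.sum_range_succ,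
    Finset.sum_eq_zero fun m hm => by rw [hcn m (Finset.mem_range.mp hm), zero_smul],
    zero_add] at hsum
  refine ((N j).add_mem_iff_left (Submodule.sum_mem _ fun m hm => ?_)).mp hsum
  exact (N j).smul_mem _ (hxj m (Finset.mem_Ico.mp hm).1)

theorem eq_of_seriesToInvLim_eq (hsep : ∀ n, ∃ j, n < j ∧ x n ∉ N j ∧ ∀ m, n < m → x m ∈ N j)
    ⦃c c' : ℕ → R⦄ (h : seriesToInvLim hg x hx c = seriesToInvLim hg x hx c')
    (hunit : ∀ n, c n ≠ c' n → IsUnit (c n - c' n)) : c = c' := by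
  classical
  by_contra hne
  have hex : ∃ n, c n ≠ c' n := Function.ne_iff.mp hne
  obtain ⟨u, hu⟩ := hunit _ (Nat.find_spec hex)
  obtain ⟨j, hnj, hxn, hxj⟩ := hsep (Nat.find hex)
  have hmem : (c - c') (Nat.find hex) • x (Nat.find hex) ∈ N j :=
    smul_mem_of_seriesToInvLim_eq_zero hg hx (by rw [map_sub, h, sub_self])
      (fun m hm => sub_eq_zero.mpr (not_not.mp (Nat.find_min hex hm))) hnj hxj
  rw [Pi.sub_apply, ← hu, ← Units.smul_def, Submodule.smul_mem_iff'] at hmem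
  exact hxn hmem

theorem seriesToInvLim_injective_of_isField (hR : IsField R)
    (hsep : ∀ n, ∃ j, n < j ∧ x n ∉ N j ∧ ∀ m, n < m → x m ∈ N j) :
    Function.Injective (seriesToInvLim hg x hx) := fun _ _ h =>
  let := hR.toField
  eq_of_seriesToInvLim_eq hg hx hsep h fun _ hn => (sub_ne_zero.mpr hn).isUnit

theorem seriesToInvLim_indicator_injective [Nontrivial R]
    (hsep : ∀ n, ∃ j, n < j ∧ x n ∉ N j ∧ ∀ m, n < m → x m ∈ N j) :
    Function.Injective fun b : ℕ → Bool =>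
      seriesToInvLim hg x hx fun n => if b n then 1 else 0 := by
  intro b b' h
  have hcoeff := eq_of_seriesToInvLim_eq hg hx hsep h fun n hn => by
    cases hb : b n <;> cases hb' : b' n <;> simp_all
  funext n
  have := congrFun hcoeff n
  cases hb : b n <;> cases hb' : b' n <;> simp_all

end SeriesToInvLim

/-- Let `R` be a field or a countable PID, `M` an `R`-module and
`M = N 0 ⊇ N 1 ⊇ N 2 ⊇ ⋯` a descending chain of submodules that does not stabilise
(for every `j`, `⨅ i, N i ≠ N j`).  Then the inverse limit `lim (M ⧸ N i)`, taken along
the natural quotient maps, is not a countably generated `R`-module. -/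
theorem invLim_quotient_not_countablyGenerated
    (R : Type) [CommRing R]
    (hR : IsField R ∨ (Countable R ∧ IsDomain R ∧ IsPrincipalIdealRing R))
    (M : Type) [AddCommGroup M] [Module R M]
    (N : ℕ → Submodule R M) (hdesc : ∀ i : ℕ, N (i + 1) ≤ N i)
    (hnotstab : ∀ j : ℕ, (⨅ i : ℕ, N i) ≠ N j) :
    ¬ CountablyGeneratedMod R
        ↥(invLim R (fun i => M ⧸ N i)
          (fun i => Submodule.mapQ (N (i + 1)) (N i) LinearMap.id
            (by simpa using hdesc i))) := by
  intro hcg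
  obtain ⟨x, hx, hsep⟩ := (antitone_nat_of_succ_le hdesc).exists_seq_separated_of_iInf_ne hnotstab
  have hg : ∀ i (m : M), Submodule.mapQ (N (i + 1)) (N i) LinearMap.id (hdesc i)
      (Submodule.Quotient.mk m) = Submodule.Quotient.mk m := fun _ _ => rfl
  rcases hR with hR | ⟨hR, _, -⟩
  · let := hR.toField
    have hrank := (LinearMap.rank_le_of_injective _
      (seriesToInvLim_injective_of_isField hg hx hR hsep)).trans
      hcg.rank_le_aleph0
    rw [rank_fun_infinite] at hrank
    exact (aleph0_lt_mk_nat_fun R).not_ge hrank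
  · have := hcg.countable
    exact (aleph0_lt_mk_nat_fun Bool).not_ge
      (mk_le_aleph0_iff.mpr (seriesToInvLim_indicator_injective hg hx hsep).countable)
end

section
/- Let R be a commutative ring that is either a field or a countable principal ideal domain, and let (M_i, g_i) be an inverse sequence of countably generated R-modules. Then lim¹ M_i = 0 if and only if (M_i) satisfies the Mittag-Leffler condition. -/
/-!
If the Mittag-Leffler condition holds, the stable images `Nᵢ ⊆ Mᵢ` satisfy `gᵢ(Nᵢ₊₁) = Nᵢ`, so
`Δ` hits every element of `∏ Nᵢ` by a recursive choice; and every `b` is congruent modulo the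
range of `Δ` to an element of `∏ Nᵢ`, via the partial sums `∑_{j < Kᵢ} f_i^{i+j}(b_{i+j})`.

Conversely, if `Δ` is onto, then so is the Eilenberg map of the chain of images
`Aⱼ = f_i^{i+j}(M_{i+j}) ⊆ Mᵢ`. If this chain does not stabilise, pass to a strictly decreasing
subchain and pick `dₖ ∈ Aₖ \ Aₖ₊₁`: every formal series `∑ cₖ dₖ` has a telescoping solution
`y ∈ ∏ Aⱼ`, and `y 0` determines `c` whenever the first nonzero coefficient of a difference is a
unit. Indicator sequences then give an injection `Set ℕ → Mᵢ`, impossible for a countable module;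
over a field a linear section gives an embedding `(ℕ → K) → Mᵢ`, impossible in countable
dimension by the Erdős–Kaplansky theorem.
-/

lemma exists_forall_apply_add_eq {X : ℕ → Type*} [∀ n, Zero (X n)] (i : ℕ)
    (F : ∀ j, X (i + j)) : ∃ B : ∀ n, X n, ∀ j, B (i + j) = F j := by
  classical
  refine ⟨fun n => if h : i ≤ n then cast (congrArg X (Nat.add_sub_cancel' h)) (F (n - i)) else 0,
    fun j => ?_⟩
  dsimp only
  rw [dif_pos (Nat.le_add_right i j), cast_eq_iff_heq]
  exact congr_arg_heq F (Nat.add_sub_cancel_left i j)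

section InverseSequence

variable {R : Type} [CommRing R] {M : ℕ → Type} [∀ i, AddCommGroup (M i)] [∀ i, Module R (M i)]
  (g : ∀ i : ℕ, M (i + 1) →ₗ[R] M i)

open LinearMap

/-- Stated for a section `x` so that no cast between `M (i + (j + 1))` and `M (i + 1 + j)`
appears. -/
lemma transDown_succ_apply (x : ∀ n, M n) (i j : ℕ) :
    transDown R M g i (j + 1) (x (i + (j + 1))) =
      g i (transDown R M g (i + 1) j (x (i + 1 + j))) := by
  induction j generalizing x with
  | zero => rfl
  | succ j ih => exact ih fun n => g n (x (n + 1))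

lemma range_transDown_succ (i j : ℕ) :
    range (transDown R M g i (j + 1)) = (range (transDown R M g (i + 1) j)).map (g i) := by
  apply le_antisymm
  · rintro _ ⟨z, rfl⟩
    refine ⟨_, ⟨Pi.single (i + (j + 1)) z (i + 1 + j), rfl⟩, ?_⟩
    simpa using (transDown_succ_apply g (Pi.single (i + (j + 1)) z) i j).symm
  · rintro _ ⟨_, ⟨z, rfl⟩, rfl⟩
    refine ⟨Pi.single (i + 1 + j) z (i + (j + 1)), ?_⟩
    simpa using transDown_succ_apply g (Pi.single (i + 1 + j) z) i j

lemma antitone_range_transDown (i : ℕ) : Antitone fun j => range (transDown R M g i j) :=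
  antitone_nat_of_succ_le fun _ => range_comp_le_range _ _

lemma mem_range_eilenberg_of_forall_mem {N : ∀ i, Submodule R (M i)}
    (hN : ∀ i, N i ≤ (N (i + 1)).map (g i)) {b : ∀ i, M i} (hb : ∀ i, b i ∈ N i) :
    b ∈ range (eilenberg R M g) := by
  have step (i : ℕ) (v : N i) : ∃ w : N (i + 1), g i w = v - b i := by
    obtain ⟨w, hw, hgw⟩ := hN i (sub_mem v.2 (hb i))
    exact ⟨⟨w, hw⟩, hgw⟩
  choose next hnext using step
  let x (i : ℕ) : N i := Nat.rec (motive := fun i => N i) 0 next i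
  refine ⟨fun i => x i, funext fun i => ?_⟩
  change (x i : M i) - g i (next i (x i)) = b i
  rw [hnext]
  abel

lemma exists_sub_eilenberg_mem {N : ∀ i, Submodule R (M i)} {K : ℕ → ℕ} (hK : Monotone K)
    (hN : ∀ i j, K i ≤ j → range (transDown R M g i j) ≤ N i) (b : ∀ i, M i) :
    ∃ s : ∀ i, M i, ∀ i, b i - eilenberg R M g s i ∈ N i := by
  let t (i j : ℕ) : M i := transDown R M g i j (b (i + j))
  refine ⟨fun i => ∑ j ∈ Finset.range (K i), t i j, fun i => ?_⟩
  have hsub : b i - eilenberg R M g (fun i => ∑ j ∈ Finset.range (K i), t i j) i =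
      ∑ j ∈ Finset.Ico (K i) (K (i + 1) + 1), t i j := by
    have hshift : g i (∑ j ∈ Finset.range (K (i + 1)), t (i + 1) j) =
        ∑ j ∈ Finset.range (K (i + 1)), t i (j + 1) := by
      rw [map_sum]
      exact Finset.sum_congr rfl fun j _ => (transDown_succ_apply g b i j).symm
    have ht0 : t i 0 = b i := rfl
    change b i - (∑ j ∈ Finset.range (K i), t i j -
      g i (∑ j ∈ Finset.range (K (i + 1)), t (i + 1) j)) = _
    rw [hshift, Finset.sum_Ico_eq_sub _ ((hK i.le_succ).trans (K (i + 1)).le_succ),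
      Finset.sum_range_succ', ht0]
    abel
  rw [hsub]
  exact Submodule.sum_mem _ fun j hj => hN i j (Finset.mem_Ico.1 hj).1 ⟨_, rfl⟩

lemma eilenberg_surjective_of_mittagLeffler (hml : MittagLeffler R M g) :
    Function.Surjective (eilenberg R M g) := by
  choose j₀ hj₀ using hml
  let N (i : ℕ) := range (transDown R M g i (j₀ i))
  have hN (i j : ℕ) (h : j₀ i ≤ j) : range (transDown R M g i j) = N i := by
    obtain ⟨k, rfl⟩ := Nat.exists_eq_add_of_le h
    exact hj₀ i k
  have hgN (i : ℕ) : N i ≤ (N (i + 1)).map (g i) := by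
    let J := max (j₀ i) (j₀ (i + 1))
    rw [← hN i (J + 1) (by omega), range_transDown_succ, hN (i + 1) J (le_max_right _ _)]
  intro b
  obtain ⟨s, hs⟩ := exists_sub_eilenberg_mem g (partialSups j₀).monotone
    (fun i j h => (hN i j ((le_partialSups j₀ i).trans h)).le) b
  obtain ⟨x, hx⟩ := mem_range_eilenberg_of_forall_mem g hgN hs
  exact ⟨s + x, by rw [map_add, hx]; ext i; exact add_sub_cancel _ _⟩

end InverseSequence

lemma Antitone.exists_strictMono_strictAnti {α : Type*} [PartialOrder α] {A : ℕ → α}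
    (hA : Antitone A) (hne : ∀ j, ∃ k, A (j + k) ≠ A j) :
    ∃ p : ℕ → ℕ, StrictMono p ∧ StrictAnti (A ∘ p) := by
  have step (j : ℕ) : ∃ j', j < j' ∧ A j' < A j := by
    obtain ⟨k, hk⟩ := hne j
    refine ⟨j + k, Nat.lt_add_of_pos_right (Nat.pos_of_ne_zero ?_),
      (hA (Nat.le_add_right j k)).lt_of_ne hk⟩
    rintro rfl
    exact hk rfl
  choose q hq using step
  refine ⟨fun k => q^[k] 0, strictMono_nat_of_lt_succ fun k => ?_,
    strictAnti_nat_of_succ_lt fun k => ?_⟩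
  · rw [Function.iterate_succ_apply']; exact (hq _).1
  · simp only [Function.comp_apply, Function.iterate_succ_apply']; exact (hq _).2

section Chain

variable {R N : Type*} [CommRing R] [AddCommGroup N] [Module R N]

/-- `lim¹` of the chain `A 0 ⊇ A 1 ⊇ ⋯` (with the inclusions as bonding maps) vanishes, i.e. its
Eilenberg map `y ↦ (y j - y (j + 1))ⱼ` on `∏ⱼ A j` is surjective. -/
def LimOneVanishes (A : ℕ → Submodule R N) : Prop :=
  ∀ b : ℕ → N, (∀ j, b j ∈ A j) → ∃ y : ℕ → N, (∀ j, y j ∈ A j) ∧ ∀ j, y j - y (j + 1) = b j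

variable {A : ℕ → Submodule R N}

lemma LimOneVanishes.comp_strictMono (h : LimOneVanishes A) {p : ℕ → ℕ} (hp : StrictMono p) :
    LimOneVanishes (A ∘ p) := by
  intro b hb
  obtain ⟨y, hyA, hy⟩ := h (Function.extend p b 0) fun j => by
    by_cases hj : ∃ k, p k = j
    · obtain ⟨k, rfl⟩ := hj
      rw [hp.injective.extend_apply]
      exact hb k
    · rw [Function.extend_apply' _ _ _ hj]
      exact zero_mem _
  refine ⟨y ∘ p, fun k => hyA (p k), fun k => ?_⟩
  have htel : y (p k) - y (p (k + 1)) =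
      ∑ j ∈ Finset.Ico (p k) (p (k + 1)), Function.extend p b 0 j := by
    rw [Finset.sum_Ico_eq_sub _ (hp k.lt_succ_self).le]
    simp only [← hy, Finset.sum_range_sub']
    abel
  rw [Function.comp_apply, Function.comp_apply, htel,
    Finset.sum_eq_single_of_mem (p k) (Finset.left_mem_Ico.2 (hp k.lt_succ_self)),
    hp.injective.extend_apply]
  intro j hj hjk
  rw [Function.extend_apply']
  · rfl
  rintro ⟨m, rfl⟩
  rw [Finset.mem_Ico, hp.le_iff_le, hp.lt_iff_lt] at hj
  exact hjk (congrArg p (by omega))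

def telescopingSolutions (A : ℕ → Submodule R N) (d : ℕ → N) :
    Submodule R ((ℕ → R) × (ℕ → N)) where
  carrier := {cy | (∀ j, cy.2 j ∈ A j) ∧ ∀ j, cy.2 j - cy.2 (j + 1) = cy.1 j • d j}
  add_mem' := by
    rintro ⟨c, y⟩ ⟨c', y'⟩ ⟨hy, hc⟩ ⟨hy', hc'⟩
    refine ⟨fun j => add_mem (hy j) (hy' j), fun j => ?_⟩
    simp only [Prod.fst_add, Prod.snd_add, Pi.add_apply, add_smul, ← hc, ← hc']
    abel
  zero_mem' := ⟨fun _ => zero_mem _, fun _ => by simp⟩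
  smul_mem' := by
    rintro r ⟨c, y⟩ ⟨hy, hc⟩
    refine ⟨fun j => Submodule.smul_mem _ r (hy j), fun j => ?_⟩
    simp only [Prod.smul_fst, Prod.smul_snd, Pi.smul_apply, ← smul_sub, hc, smul_smul, smul_eq_mul]

variable {d : ℕ → N}

lemma LimOneVanishes.exists_mem_telescopingSolutions (h : LimOneVanishes A)
    (hd : ∀ k, d k ∈ A k) (c : ℕ → R) : ∃ y, (c, y) ∈ telescopingSolutions A d :=
  h _ fun j => Submodule.smul_mem _ _ (hd j)

/-- Summing the telescoping equation up to the first nonzero `c K` gives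
`c K • d K = -y (K + 1) ∈ A (K + 1)`. -/
lemma fst_eq_zero_of_mem_telescopingSolutions (hd : ∀ k, d k ∉ A (k + 1))
    {cy : (ℕ → R) × (ℕ → N)} (hcy : cy ∈ telescopingSolutions A d) (hy0 : cy.2 0 = 0)
    (hunit : ∀ k, cy.1 k ≠ 0 → IsUnit (cy.1 k)) : cy.1 = 0 := by
  classical
  by_contra hne
  have hex : ∃ k, cy.1 k ≠ 0 := Function.ne_iff.1 hne
  set K := Nat.find hex
  have hsum : ∑ k ∈ Finset.range (K + 1), cy.1 k • d k = -cy.2 (K + 1) := by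
    rw [← Finset.sum_congr rfl fun j _ => hcy.2 j, Finset.sum_range_sub', hy0, zero_sub]
  rw [Finset.sum_range_succ, Finset.sum_eq_zero fun k hk => by
    rw [not_not.1 (Nat.find_min hex (Finset.mem_range.1 hk)), zero_smul], zero_add] at hsum
  have hmem : cy.1 K • d K ∈ A (K + 1) := hsum ▸ neg_mem (hcy.1 _)
  exact hd K ((Submodule.smul_mem_iff_of_isUnit _ (hunit K (Nat.find_spec hex))).1 hmem)

lemma LimOneVanishes.exists_injective_of_strictAnti (h : LimOneVanishes A) (hA : StrictAnti A) :
    ∃ Φ : Set ℕ → N, Function.Injective Φ := by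
  classical
  choose d hdA hd using fun k : ℕ => SetLike.exists_of_lt (hA k.lt_succ_self)
  have : Nontrivial N := ⟨d 0, 0, fun h => hd 0 (h ▸ zero_mem _)⟩
  have : Nontrivial R := Module.nontrivial R N
  choose y hy using fun s : Set ℕ => h.exists_mem_telescopingSolutions hdA (s.indicator 1)
  refine ⟨fun s => y s 0, fun s t hst => Set.indicator_one_inj R (sub_eq_zero.1 ?_)⟩
  refine fst_eq_zero_of_mem_telescopingSolutions hd (sub_mem (hy s) (hy t)) (sub_eq_zero.2 hst)
    fun k hk => ?_
  simp only [Prod.fst_sub, Pi.sub_apply, Set.indicator_apply] at hk ⊢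
  split_ifs at hk ⊢ <;> simp_all

lemma LimOneVanishes.exists_forall_add_eq_of_countable [Countable N] (h : LimOneVanishes A)
    (hA : Antitone A) : ∃ j, ∀ k, A (j + k) = A j := by
  by_contra! hne
  obtain ⟨p, hp, hAp⟩ := hA.exists_strictMono_strictAnti hne
  obtain ⟨Φ, hΦ⟩ := (h.comp_strictMono hp).exists_injective_of_strictAnti hAp
  obtain ⟨ι, hι⟩ := exists_injective_nat N
  exact Function.cantor_injective _ (hι.comp hΦ)

end Chain

section Field

variable {K N : Type*} [Field K] [AddCommGroup N] [Module K N] {A : ℕ → Submodule K N}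

lemma LimOneVanishes.exists_injective_linearMap_of_strictAnti (h : LimOneVanishes A)
    (hA : StrictAnti A) : ∃ Ψ : (ℕ → K) →ₗ[K] N, Function.Injective Ψ := by
  choose d hdA hd using fun k : ℕ => SetLike.exists_of_lt (hA k.lt_succ_self)
  let S := telescopingSolutions A d
  let π : S →ₗ[K] ℕ → K := (LinearMap.fst K _ _).comp S.subtype
  obtain ⟨σ, hσ⟩ := π.exists_rightInverse_of_surjective <| LinearMap.range_eq_top.2 fun c =>
    let ⟨y, hy⟩ := h.exists_mem_telescopingSolutions hdA c
    ⟨⟨(c, y), hy⟩, rfl⟩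
  refine ⟨(LinearMap.proj 0).comp ((LinearMap.snd K _ _).comp (S.subtype.comp σ)),
    (injective_iff_map_eq_zero _).2 fun c hc => ?_⟩
  have hσc : ((σ c : S) : (ℕ → K) × (ℕ → N)).1 = c := LinearMap.congr_fun hσ c
  rw [← hσc]
  exact fst_eq_zero_of_mem_telescopingSolutions hd (σ c).2 hc fun _ hk => hk.isUnit


lemma LimOneVanishes.exists_forall_add_eq_of_rank_le_aleph0
    (hN : Module.rank K N ≤ Cardinal.aleph0) (h : LimOneVanishes A) (hA : Antitone A) :
    ∃ j, ∀ k, A (j + k) = A j := by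
  by_contra! hne
  obtain ⟨p, hp, hAp⟩ := hA.exists_strictMono_strictAnti hne
  obtain ⟨Ψ, hΨ⟩ := (h.comp_strictMono hp).exists_injective_linearMap_of_strictAnti hAp
  have hcard : Cardinal.lift (Cardinal.mk (ℕ → K)) ≤ Cardinal.aleph0 := by
    rw [← rank_fun_infinite]
    exact (Ψ.lift_rank_le_of_injective hΨ).trans (by simpa using hN)
  have : Countable (ℕ → K) := Cardinal.mk_le_aleph0_iff.1 (Cardinal.lift_le_aleph0.1 hcard)
  obtain ⟨ι, hι⟩ := exists_injective_nat (ℕ → K)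
  exact Function.cantor_injective _ (hι.comp fun s t hst => Set.indicator_one_inj K hst)

end Field

lemma limOneVanishes_range_transDown {R : Type} [CommRing R] {M : ℕ → Type}
    [∀ i, AddCommGroup (M i)] [∀ i, Module R (M i)] {g : ∀ i : ℕ, M (i + 1) →ₗ[R] M i}
    (hg : Function.Surjective (eilenberg R M g)) (i : ℕ) :
    LimOneVanishes fun j => LinearMap.range (transDown R M g i j) := by
  intro b hb
  choose m hm using hb
  obtain ⟨B, hB⟩ := exists_forall_apply_add_eq i m
  obtain ⟨x, rfl⟩ := hg B
  refine ⟨fun j => transDown R M g i j (x (i + j)), fun j => ⟨_, rfl⟩, fun j => ?_⟩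
  rw [← hm, ← hB]
  exact (map_sub _ _ _).symm

lemma CountablyGeneratedMod.countable_s9 {R M : Type} [CommRing R] [Countable R] [AddCommGroup M]
    [Module R M] (h : CountablyGeneratedMod R M) : Countable M := by
  obtain ⟨S, hS, hspan⟩ := h
  have := hS.to_subtype
  have : Countable (Submodule.span R (Set.range ((↑) : S → M))) := inferInstance
  rw [Subtype.range_coe, hspan] at this
  exact Countable.of_equiv (⊤ : Submodule R M) Submodule.topEquiv.toEquiv

lemma CountablyGeneratedMod.rank_le_aleph0_s9 {R M : Type} [CommRing R] [StrongRankCondition R]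
    [AddCommGroup M] [Module R M] (h : CountablyGeneratedMod R M) :
    Module.rank R M ≤ Cardinal.aleph0 := by
  obtain ⟨S, hS, hspan⟩ := h
  rw [← rank_top R M, ← hspan]
  exact (rank_span_le S).trans (Cardinal.mk_le_aleph0_iff.2 hS.to_subtype)

/-- Let `R` be a field or a countable PID, and let `(Mᵢ, gᵢ)` be an inverse sequence of
countably generated `R`-modules.  Then `lim¹ Mᵢ = 0` if and only if `(Mᵢ)` satisfies the
Mittag-Leffler condition. -/
theorem derivedLim_eq_zero_iff_mittagLeffler
    (R : Type) [CommRing R]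
    (hR : IsField R ∨ (Countable R ∧ IsDomain R ∧ IsPrincipalIdealRing R))
    (M : ℕ → Type) [∀ i, AddCommGroup (M i)] [∀ i, Module R (M i)]
    (g : ∀ i : ℕ, M (i + 1) →ₗ[R] M i)
    (hcg : ∀ i : ℕ, CountablyGeneratedMod R (M i)) :
    Subsingleton (derivedLim R M g) ↔ MittagLeffler R M g := by
  rw [Submodule.Quotient.subsingleton_iff, LinearMap.range_eq_top]
  refine ⟨fun hg i => ?_, eilenberg_surjective_of_mittagLeffler g⟩
  have hA := antitone_range_transDown g i
  have hV := limOneVanishes_range_transDown hg i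
  rcases hR with hfield | ⟨hcount, -, -⟩
  · let _ : Field R := hfield.toField
    exact hV.exists_forall_add_eq_of_rank_le_aleph0 (hcg i).rank_le_aleph0_s9 hA
  · have := (hcg i).countable_s9
    exact hV.exists_forall_add_eq_of_countable hA
end

section
/- Let R be a principal ideal domain, let (M_i, g_i) be a stable inverse sequence of R-modules with inverse limit M := lim M_i, and let N be an R-module. Then the induced inverse sequence (M_i ⊗_R N) with bonding maps g_i ⊗ id_N is stable, and the canonical R-linear map M ⊗_R N → lim (M_i ⊗_R N), induced by the maps f_i ⊗ id_N : M ⊗_R N → M_i ⊗_R N, is an isomorphism. -/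
open TensorProduct

/-! Under the Mittag-Leffler condition the image of `lim Mᵢ → Mᵢ` is the stable image, so some
`f_i^j : M_j → M_i` factors through `lim Mᵢ`; if `fᵢ` is injective, this factorisation makes
the projection `lim Mᵢ → M_j` a split injection. Both facts survive `- ⊗ N`: the map
`(lim Mᵢ) ⊗ N → M_j ⊗ N` stays injective, and every component of a thread of `(Mᵢ ⊗ N)` lies
in the image of `(lim Mᵢ) ⊗ N`. These two properties of a cone already force the canonical map
to the limit to be bijective, and stability of `(Mᵢ ⊗ N)` follows. -/

theorem LinearMap.exists_comp_eq_of_range_le {R A B C : Type*} [Semiring R]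
    [AddCommMonoid A] [AddCommMonoid B] [AddCommMonoid C] [Module R A] [Module R B] [Module R C]
    {f : A →ₗ[R] C} (hf : Function.Injective f) {h : B →ₗ[R] C} (hle : range h ≤ range f) :
    ∃ r : B →ₗ[R] A, f ∘ₗ r = h :=
  ⟨(LinearEquiv.ofInjective f hf).symm.toLinearMap ∘ₗ h.codRestrict _ fun b => hle ⟨b, rfl⟩,
    LinearMap.ext fun _ => LinearEquiv.ofInjective_symm_apply f (h := hf) _⟩

theorem LinearMap.range_rTensor_mono {R A B C : Type*} [CommSemiring R]
    [AddCommMonoid A] [AddCommMonoid B] [AddCommMonoid C] [Module R A] [Module R B] [Module R C]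
    (N : Type*) [AddCommMonoid N] [Module R N] {f : A →ₗ[R] C} {f' : B →ₗ[R] C}
    (h : range f ≤ range f') : range (f.rTensor N) ≤ range (f'.rTensor N) := by
  rw [rTensor_range N (g := f), rTensor_range N (g := f'),
    ← Submodule.subtype_comp_inclusion _ _ h, rTensor_comp]
  exact range_comp_le_range _ _

section InverseSequence

variable {R : Type} [CommRing R] {M : ℕ → Type} [∀ i, AddCommGroup (M i)]
  [∀ i, Module R (M i)] {g : ∀ i : ℕ, M (i + 1) →ₗ[R] M i}

theorem mem_invLim_iff {x : ∀ i, M i} : x ∈ invLim R M g ↔ ∀ i, g i (x (i + 1)) = x i := by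
  show eilenberg R M g x = 0 ↔ _
  exact funext_iff.trans (forall_congr' fun _ => sub_eq_zero.trans eq_comm)

theorem transDown_apply_of_mem_invLim {x : ∀ i, M i} (hx : x ∈ invLim R M g) (i e : ℕ) :
    transDown R M g i e (x (i + e)) = x i := by
  induction e with
  | zero => rfl
  | succ e ih => exact (congrArg (transDown R M g i e) (mem_invLim_iff.mp hx (i + e))).trans ih

theorem bonding_comp_limProj (i : ℕ) : g i ∘ₗ limProj R M g (i + 1) = limProj R M g i :=
  LinearMap.ext fun x => mem_invLim_iff.mp x.2 i

theorem cast_bonding {a b : ℕ} (h : a = b) (y : M (a + 1)) :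
    LinearEquiv.cast (R := R) h (g a y) =
      g b (LinearEquiv.cast (R := R) (congrArg (· + 1) h) y) := by
  subst h; rfl

theorem bonding_apply_transDown (k e : ℕ) (x : M (k + 1 + e)) :
    g k (transDown R M g (k + 1) e x) =
      transDown R M g k (e + 1) (LinearEquiv.cast (R := R) (Nat.succ_add k e) x) := by
  induction e with
  | zero => rfl
  | succ e ih =>
    show g k (transDown R M g (k + 1) e (g (k + 1 + e) x)) = _
    rw [ih, cast_bonding]
    rfl

theorem range_transDown_succ_le (k e : ℕ) :
    LinearMap.range (transDown R M g k (e + 1)) ≤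
      (LinearMap.range (transDown R M g (k + 1) e)).map (g k) := by
  rintro _ ⟨x, rfl⟩
  refine ⟨_, ⟨(LinearEquiv.cast (R := R) (Nat.succ_add k e)).symm x, rfl⟩, ?_⟩
  rw [bonding_apply_transDown, LinearEquiv.apply_symm_apply]

theorem range_transDown_antitone (i : ℕ) :
    Antitone fun e => LinearMap.range (transDown R M g i e) :=
  antitone_nat_of_succ_le fun _ => LinearMap.range_comp_le_range _ _

variable (R M g) in
noncomputable def stableRange (i : ℕ) : Submodule R (M i) :=
  ⨅ e, LinearMap.range (transDown R M g i e)

theorem MittagLeffler.exists_stableRange_eq (hML : MittagLeffler R M g) (i : ℕ) :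
    ∃ d, stableRange R M g i = LinearMap.range (transDown R M g i d) := by
  obtain ⟨d, hd⟩ := hML i
  refine ⟨d, le_antisymm (iInf_le _ d) (le_iInf fun e => ?_)⟩
  rw [← hd e]
  exact range_transDown_antitone i (Nat.le_add_left e d)

theorem MittagLeffler.stableRange_le_map (hML : MittagLeffler R M g) (k : ℕ) :
    stableRange R M g k ≤ (stableRange R M g (k + 1)).map (g k) := by
  obtain ⟨d, hd⟩ := hML.exists_stableRange_eq (k + 1)
  rw [hd]
  exact (iInf_le _ (d + 1)).trans (range_transDown_succ_le k d)

theorem MittagLeffler.exists_chain (hML : MittagLeffler R M g) {i : ℕ} {m : M i}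
    (hm : m ∈ stableRange R M g i) :
    ∃ y : ∀ k, M (i + k), y 0 = m ∧ ∀ k, g (i + k) (y (k + 1)) = y k := by
  choose lift hlift_mem hlift using fun k (x : stableRange R M g k) =>
    Submodule.mem_map.mp (hML.stableRange_le_map k x.2)
  let y : ∀ k, stableRange R M g (i + k) := fun k =>
    Nat.rec (motive := fun k => stableRange R M g (i + k)) ⟨m, hm⟩
      (fun k yk => ⟨lift (i + k) yk, hlift_mem _ _⟩) k
  exact ⟨fun k => y k, rfl, fun k => hlift (i + k) (y k)⟩

theorem exists_mem_invLim_of_chain {i : ℕ} (y : ∀ k, M (i + k))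
    (hy : ∀ k, g (i + k) (y (k + 1)) = y k) : ∃ x ∈ invLim R M g, x i = y 0 := by
  have hdown : ∀ k, transDown R M g i k (y k) = y 0 := by
    intro k
    induction k with
    | zero => rfl
    | succ k ih => exact (congrArg (transDown R M g i k) (hy k)).trans ih
  refine ⟨fun n => transDown R M g n i (LinearEquiv.cast (R := R) (Nat.add_comm i n) (y n)),
    mem_invLim_iff.mpr fun n => ?_, hdown i⟩
  rw [bonding_apply_transDown, ← hy n, cast_bonding]
  simp only [LinearEquiv.cast_apply, cast_cast]
  rfl

theorem MittagLeffler.range_limProj (hML : MittagLeffler R M g) (i : ℕ) :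
    LinearMap.range (limProj R M g i) = stableRange R M g i := by
  refine le_antisymm ?_ fun m hm => ?_
  · rintro _ ⟨x, rfl⟩
    exact Submodule.mem_iInf _ |>.mpr fun e =>
      ⟨x.1 (i + e), transDown_apply_of_mem_invLim x.2 i e⟩
  · obtain ⟨y, rfl, hy⟩ := hML.exists_chain hm
    obtain ⟨x, hx, hxi⟩ := exists_mem_invLim_of_chain y hy
    exact ⟨⟨x, hx⟩, hxi⟩

theorem MittagLeffler.exists_range_transDown_eq_range_limProj (hML : MittagLeffler R M g)
    (i : ℕ) :
    ∃ d, LinearMap.range (transDown R M g i d) = LinearMap.range (limProj R M g i) := by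
  obtain ⟨d, hd⟩ := hML.exists_stableRange_eq i
  exact ⟨d, by rw [hML.range_limProj, hd]⟩

theorem IsStable.exists_retraction (hs : IsStable R M g) :
    ∃ j, ∃ r : M j →ₗ[R] invLim R M g, r ∘ₗ limProj R M g j = LinearMap.id := by
  obtain ⟨hML, i₀, hinj⟩ := hs
  obtain ⟨d, hd⟩ := hML.exists_range_transDown_eq_range_limProj i₀
  obtain ⟨r, hr⟩ := LinearMap.exists_comp_eq_of_range_le (hinj i₀ le_rfl) hd.le
  refine ⟨i₀ + d, r, LinearMap.ext fun x => hinj i₀ le_rfl ?_⟩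
  show limProj R M g i₀ (r (limProj R M g (i₀ + d) x)) = limProj R M g i₀ x
  rw [← LinearMap.comp_apply (limProj R M g i₀) r, hr]
  exact transDown_apply_of_mem_invLim x.2 i₀ d

section Cone

variable {L : Type*} [AddCommMonoid L] [Module R L] (p : ∀ i, L →ₗ[R] M i)

theorem transDown_comp_of_pi_mem_invLim (hp : ∀ x, LinearMap.pi p x ∈ invLim R M g)
    (i e : ℕ) : transDown R M g i e ∘ₗ p (i + e) = p i :=
  LinearMap.ext fun x => transDown_apply_of_mem_invLim (hp x) i e

theorem injective_of_pi_mem_invLim (hp : ∀ x, LinearMap.pi p x ∈ invLim R M g) {i j : ℕ}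
    (hij : i ≤ j) (hi : Function.Injective (p i)) : Function.Injective (p j) := by
  obtain ⟨e, rfl⟩ := Nat.exists_eq_add_of_le hij
  rw [← transDown_comp_of_pi_mem_invLim p hp, LinearMap.coe_comp] at hi
  exact hi.of_comp

theorem bijective_codRestrict_pi (hp : ∀ x, LinearMap.pi p x ∈ invLim R M g) {j : ℕ}
    (hinj : Function.Injective (p j))
    (hrange : ∀ y ∈ invLim R M g, ∀ k, y k ∈ LinearMap.range (p k)) :
    Function.Bijective (LinearMap.codRestrict (invLim R M g) (LinearMap.pi p) hp) := by
  refine ⟨fun a b hab => hinj (congrFun (congrArg Subtype.val hab) j), fun y => ?_⟩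
  obtain ⟨t, ht⟩ := hrange y.1 y.2 j
  have hlarge : ∀ k, j ≤ k → p k t = y.1 k := by
    intro k hk
    obtain ⟨e, rfl⟩ := Nat.exists_eq_add_of_le hk
    obtain ⟨t', ht'⟩ := hrange y.1 y.2 (j + e)
    have : t' = t := hinj <| by
      rw [ht, ← transDown_comp_of_pi_mem_invLim p hp j e, LinearMap.comp_apply, ht',
        transDown_apply_of_mem_invLim y.2]
    rw [← this, ht']
  refine ⟨t, Subtype.ext <| funext fun n => ?_⟩
  show p n t = y.1 n
  rw [← transDown_comp_of_pi_mem_invLim p hp n j, LinearMap.comp_apply,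
    hlarge (n + j) (Nat.le_add_left j n), transDown_apply_of_mem_invLim y.2]

theorem injective_limProj_of_surjective_codRestrict (hp : ∀ x, LinearMap.pi p x ∈ invLim R M g)
    (hsurj : Function.Surjective (LinearMap.codRestrict (invLim R M g) (LinearMap.pi p) hp))
    {i : ℕ} (hi : Function.Injective (p i)) : Function.Injective (limProj R M g i) := by
  intro u v huv
  obtain ⟨a, rfl⟩ := hsurj u
  obtain ⟨b, rfl⟩ := hsurj v
  exact congrArg _ (hi huv)

end Cone

section TensorProduct

variable (N : Type) [AddCommGroup N] [Module R N]

theorem transDown_rTensor (i e : ℕ) :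
    transDown R (fun i => M i ⊗[R] N) (fun i => (g i).rTensor N) i e =
      (transDown R M g i e).rTensor N := by
  induction e with
  | zero => exact (LinearMap.rTensor_id N (M i)).symm
  | succ e ih =>
    show transDown R (fun i => M i ⊗[R] N) (fun i => (g i).rTensor N) i e ∘ₗ
      (g (i + e)).rTensor N = _
    rw [ih, ← LinearMap.rTensor_comp]
    rfl

theorem MittagLeffler.rTensor (hML : MittagLeffler R M g) :
    MittagLeffler R (fun i => M i ⊗[R] N) (fun i => (g i).rTensor N) := fun i => by
  obtain ⟨d, hd⟩ := hML i
  refine ⟨d, fun k => ?_⟩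
  simp only [transDown_rTensor]
  exact le_antisymm (LinearMap.range_rTensor_mono N (hd k).le)
    (LinearMap.range_rTensor_mono N (hd k).ge)

theorem pi_rTensor_limProj_mem_invLim (x : invLim R M g ⊗[R] N) :
    LinearMap.pi (fun i => (limProj R M g i).rTensor N) x ∈
      invLim R (fun i => M i ⊗[R] N) (fun i => (g i).rTensor N) :=
  mem_invLim_iff.mpr fun i => by
    rw [LinearMap.pi_apply, LinearMap.pi_apply, ← LinearMap.rTensor_comp_apply,
      bonding_comp_limProj]

theorem IsStable.exists_injective_rTensor_limProj (hs : IsStable R M g) :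
    ∃ j, Function.Injective ((limProj R M g j).rTensor N) := by
  obtain ⟨j, r, hr⟩ := hs.exists_retraction
  refine ⟨j, Function.LeftInverse.injective (g := r.rTensor N) fun x => ?_⟩
  rw [← LinearMap.rTensor_comp_apply, hr, LinearMap.rTensor_id, LinearMap.id_apply]

theorem MittagLeffler.mem_range_rTensor_limProj (hML : MittagLeffler R M g)
    {y : ∀ i, M i ⊗[R] N} (hy : y ∈ invLim R (fun i => M i ⊗[R] N) (fun i => (g i).rTensor N))
    (k : ℕ) : y k ∈ LinearMap.range ((limProj R M g k).rTensor N) := by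
  obtain ⟨d, hd⟩ := hML.exists_range_transDown_eq_range_limProj k
  refine LinearMap.range_rTensor_mono N hd.le ⟨y (k + d), ?_⟩
  rw [← transDown_rTensor, transDown_apply_of_mem_invLim hy]

end TensorProduct

end InverseSequence

theorem tensor_invLim_stable_and_canonical_iso_general
    (R : Type) [CommRing R]
    (M : ℕ → Type) [∀ i, AddCommGroup (M i)] [∀ i, Module R (M i)]
    (g : ∀ i : ℕ, M (i + 1) →ₗ[R] M i)
    (N : Type) [AddCommGroup N] [Module R N]
    (hstable : IsStable R M g) :
    IsStable R (fun i => M i ⊗[R] N) (fun i => LinearMap.rTensor N (g i)) ∧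
    ∃ h : ∀ x : ↥(invLim R M g) ⊗[R] N,
        (LinearMap.pi fun i => LinearMap.rTensor N (limProj R M g i)) x ∈
          invLim R (fun i => M i ⊗[R] N) (fun i => LinearMap.rTensor N (g i)),
      Function.Bijective
        (LinearMap.codRestrict
          (invLim R (fun i => M i ⊗[R] N) (fun i => LinearMap.rTensor N (g i)))
          (LinearMap.pi fun i => LinearMap.rTensor N (limProj R M g i)) h) := by
  have hp := pi_rTensor_limProj_mem_invLim (g := g) N
  obtain ⟨j, hj⟩ := hstable.exists_injective_rTensor_limProj N
  have hbij := bijective_codRestrict_pi _ hp hj fun _ hy k =>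
    hstable.1.mem_range_rTensor_limProj N hy k
  refine ⟨⟨hstable.1.rTensor N, j, fun i hi => ?_⟩, hp, hbij⟩
  exact injective_limProj_of_surjective_codRestrict _ hp hbij.2
    (injective_of_pi_mem_invLim _ hp hi hj)

/-- Let `R` be a PID, `(Mᵢ, gᵢ)` a stable inverse sequence of `R`-modules with inverse limit
`M`, and `N` an `R`-module.  Then the induced inverse sequence `(Mᵢ ⊗ N, gᵢ ⊗ id)` is stable,
and the canonical map `M ⊗ N → lim (Mᵢ ⊗ N)` induced by the maps `fᵢ ⊗ id` is an
isomorphism. -/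
theorem tensor_invLim_stable_and_canonical_iso
    (R : Type) [CommRing R] [IsDomain R] [IsPrincipalIdealRing R]
    (M : ℕ → Type) [∀ i, AddCommGroup (M i)] [∀ i, Module R (M i)]
    (g : ∀ i : ℕ, M (i + 1) →ₗ[R] M i)
    (N : Type) [AddCommGroup N] [Module R N]
    (hstable : IsStable R M g) :
    IsStable R (fun i => M i ⊗[R] N) (fun i => LinearMap.rTensor N (g i)) ∧
    ∃ h : ∀ x : ↥(invLim R M g) ⊗[R] N,
        (LinearMap.pi fun i => LinearMap.rTensor N (limProj R M g i)) x ∈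
          invLim R (fun i => M i ⊗[R] N) (fun i => LinearMap.rTensor N (g i)),
      Function.Bijective
        (LinearMap.codRestrict
          (invLim R (fun i => M i ⊗[R] N) (fun i => LinearMap.rTensor N (g i)))
          (LinearMap.pi fun i => LinearMap.rTensor N (limProj R M g i)) h) :=
  tensor_invLim_stable_and_canonical_iso_general R M g N hstable
end
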